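/- Consider the dyadic setup. Fix s ∈ {1,2,3} and α_s ∈ ℝ. Suppose that for every value w = (a, c, z) of W, the law of U given {W = w, S = s} is the exponential tilt by α_s of the law of U given {W = w, S = 0}, that the moment generating function of law(U | W = w, S = 0) is finite in an open interval containing α_s, and that the law of the centered variable Δ₀ := U − E[U | W = w, S = 0] under μ(· | W = w, S = 0) depends on w only through its C-component c. Then the difference β^s(w) := E[U | W = w, S = s] − E[U | W = w, S = 0] depends on w only through c; explicitly it equals K'_c(α_s), where K_c is the cumulant generating function of the (c-dependent) centered law of Δ₀. -/

import Mathlib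

open MeasureTheory ProbabilityTheory

/-- The exponential tilt of a measure `ν` on `ℝ` by `α`: the probability measure absolutely
continuous with respect to `ν` with density `x ↦ exp (α x) / ∫ exp (α y) dν(y)`. -/
noncomputable def expTilt (ν : Measure ℝ) (α : ℝ) : Measure ℝ :=
  ν.withDensity fun x => ENNReal.ofReal (Real.exp (α * x) / ∫ y, Real.exp (α * y) ∂ν)

/-- The conditional mean `E[U | B] = (1/μ(B)) ∫_B U dμ`. -/
noncomputable def condMean {Ω : Type*} [MeasurableSpace Ω] (μ : Measure Ω)
    (U : Ω → ℝ) (B : Set Ω) : ℝ :=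
  (μ B).toReal⁻¹ * ∫ ω in B, U ω ∂μ

/-- The event `{W = (a, c, z), S = s}` in the dyadic setup. -/
def dyadEvent {Ω 𝒜 𝒞 𝒵 : Type*} (A : Ω → 𝒜) (C : Ω → 𝒞) (Z : Ω → 𝒵) (S : Ω → Fin 4)
    (a : 𝒜) (c : 𝒞) (z : 𝒵) (s : Fin 4) : Set Ω :=
  {ω | A ω = a ∧ C ω = c ∧ Z ω = z ∧ S ω = s}

/-!
Given `W = w`, let `ν` be the law of `U` under `S = 0` and `m₀` its mean. The law of `U` under
`S = s` is the tilt of `ν` by `αₛ`, whose mean is `K_ν'(αₛ)` for the cumulant generating function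
`K_ν`. Centring subtracts `t m₀` from `K_ν(t)`, so `βˢ(w) = K_ν'(αₛ) - m₀` is the derivative at `αₛ`
of the cumulant generating function of the law of `U - m₀`, which depends on `w` only through `c`.
-/

open Real Topology

namespace ProbabilityTheory

variable {Ω : Type*} {mΩ : MeasurableSpace Ω} {μ : Measure Ω} {X : Ω → ℝ} {t : ℝ}

lemma cgf_id_map (hX : AEMeasurable X μ) : cgf id (μ.map X) = cgf X μ := by
  ext t
  rw [cgf, cgf, mgf_id_map hX]

lemma cgf_add_const [NeZero μ] (hX : Integrable (fun ω ↦ exp (t * X ω)) μ) (c : ℝ) :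
    cgf (fun ω ↦ X ω + c) μ t = cgf X μ t + t * c := by
  rw [cgf, mgf_add_const, log_mul (mgf_pos' (NeZero.ne μ) hX).ne' (exp_ne_zero _), log_exp, cgf]

lemma deriv_cgf_add_const [NeZero μ] (ht : t ∈ interior (integrableExpSet X μ)) (c : ℝ) :
    deriv (cgf (fun ω ↦ X ω + c) μ) t = deriv (cgf X μ) t + c := by
  have hcgf : cgf (fun ω ↦ X ω + c) μ =ᶠ[𝓝 t] fun u ↦ cgf X μ u + u * c := by
    filter_upwards [isOpen_interior.mem_nhds ht] with u hu
    exact cgf_add_const (integrable_of_mem_integrableExpSet (interior_subset hu)) c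
  rw [hcgf.deriv_eq]
  exact ((analyticAt_cgf ht).differentiableAt.hasDerivAt.add (hasDerivAt_mul_const c)).deriv

lemma deriv_cgf_sub_const [NeZero μ] (ht : t ∈ interior (integrableExpSet X μ)) (c : ℝ) :
    deriv (cgf (fun ω ↦ X ω - c) μ) t = (μ.tilted (t * X ·))[X] - c := by
  simp_rw [sub_eq_add_neg, deriv_cgf_add_const ht, integral_tilted_mul_self ht]

end ProbabilityTheory

lemma expTilt_eq_tilted (ν : Measure ℝ) (α : ℝ) : expTilt ν α = ν.tilted (α * ·) := rfl

lemma condMean_eq_integral_cond {Ω : Type*} [MeasurableSpace Ω] (μ : Measure Ω)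
    (U : Ω → ℝ) (B : Set Ω) : condMean μ U B = (μ[|B])[U] := by
  rw [condMean, ProbabilityTheory.cond, integral_smul_measure, ENNReal.toReal_inv, smul_eq_mul]

lemma integral_sub_integral_eq_deriv_cgf_centered {Ω : Type*} [MeasurableSpace Ω]
    {P P' : Measure Ω} [IsProbabilityMeasure P] {U : Ω → ℝ} (hU : Measurable U) {α : ℝ}
    (htilt : P'.map U = expTilt (P.map U) α)
    (hα : α ∈ interior (integrableExpSet id (P.map U))) :
    P'[U] - P[U] = deriv (cgf id (P.map fun ω ↦ U ω - P[U])) α := by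
  set ν := P.map U
  have : IsProbabilityMeasure ν := Measure.isProbabilityMeasure_map hU.aemeasurable
  have hmean : P'[U] = (ν.tilted (α * ·))[id] := by
    rw [← expTilt_eq_tilted, ← htilt, integral_map hU.aemeasurable aestronglyMeasurable_id]
    rfl
  have hcgf : cgf id (P.map fun ω ↦ U ω - P[U]) = cgf (· - P[U]) ν := by
    change cgf id (P.map ((· - P[U]) ∘ U)) = _
    rw [← Measure.map_map (measurable_sub_const _) hU,
      cgf_id_map (measurable_sub_const _).aemeasurable]
  rw [hmean, hcgf]
  exact (deriv_cgf_sub_const hα _).symm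

theorem beta_depends_only_on_c_general
    {Ω 𝒜 𝒞 𝒵 : Type*} [MeasurableSpace Ω]
    (μ : Measure Ω) [IsProbabilityMeasure μ]
    (A : Ω → 𝒜) (C : Ω → 𝒞) (Z : Ω → 𝒵) (S : Ω → Fin 4)
    (U : Ω → ℝ) (hU : Measurable U)
    (s : Fin 4) (αs : ℝ)
    (hpos : ∀ (a : 𝒜) (c : 𝒞) (z : 𝒵),
      0 < μ (dyadEvent A C Z S a c z 0) ∧ 0 < μ (dyadEvent A C Z S a c z s))
    (htilt : ∀ (a : 𝒜) (c : 𝒞) (z : 𝒵),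
      Measure.map U (μ[|dyadEvent A C Z S a c z s])
        = expTilt (Measure.map U (μ[|dyadEvent A C Z S a c z 0])) αs)
    (hmgf : ∀ (a : 𝒜) (c : 𝒞) (z : 𝒵), ∃ l r : ℝ, l < αs ∧ αs < r ∧
      ∀ t ∈ Set.Ioo l r, Integrable (fun x => Real.exp (t * x))
        (Measure.map U (μ[|dyadEvent A C Z S a c z 0])))
    (hcent : ∀ (a a' : 𝒜) (c : 𝒞) (z z' : 𝒵),
      Measure.map (fun ω => U ω - condMean μ U (dyadEvent A C Z S a c z 0))
          (μ[|dyadEvent A C Z S a c z 0])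
        = Measure.map (fun ω => U ω - condMean μ U (dyadEvent A C Z S a' c z' 0))
          (μ[|dyadEvent A C Z S a' c z' 0])) :
    ∀ (a a' : 𝒜) (c : 𝒞) (z z' : 𝒵),
      (condMean μ U (dyadEvent A C Z S a c z s) - condMean μ U (dyadEvent A C Z S a c z 0)
        = condMean μ U (dyadEvent A C Z S a' c z' s)
          - condMean μ U (dyadEvent A C Z S a' c z' 0))
      ∧ condMean μ U (dyadEvent A C Z S a c z s) - condMean μ U (dyadEvent A C Z S a c z 0)
        = deriv (fun t => Real.log (∫ x, Real.exp (t * x)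
            ∂(Measure.map (fun ω => U ω - condMean μ U (dyadEvent A C Z S a c z 0))
              (μ[|dyadEvent A C Z S a c z 0])))) αs := by
  have hcell : ∀ (a : 𝒜) (c : 𝒞) (z : 𝒵),
      condMean μ U (dyadEvent A C Z S a c z s) - condMean μ U (dyadEvent A C Z S a c z 0)
        = deriv (fun t => Real.log (∫ x, Real.exp (t * x)
            ∂(Measure.map (fun ω => U ω - condMean μ U (dyadEvent A C Z S a c z 0))
              (μ[|dyadEvent A C Z S a c z 0])))) αs := by
    intro a c z
    have := cond_isProbabilityMeasure (μ := μ) (hpos a c z).1.ne'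
    obtain ⟨l, r, hl, hr, hint⟩ := hmgf a c z
    simp only [condMean_eq_integral_cond]
    exact integral_sub_integral_eq_deriv_cgf_centered hU (htilt a c z)
      (interior_maximal hint isOpen_Ioo ⟨hl, hr⟩)
  intro a a' c z z'
  exact ⟨by rw [hcell, hcell, hcent a a' c z z'], hcell a c z⟩

/-- **The selection-bias shift `βˢ(w)` depends on `w = (a, c, z)` only through `c`.**
In the dyadic setup, fix `s ∈ {1,2,3}` and `αₛ ∈ ℝ`.  Suppose that for every value
`w = (a, c, z)` of `W`, the law of `U` given `{W = w, S = s}` is the exponential tilt by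
`αₛ` of the law of `U` given `{W = w, S = 0}`, the moment generating function of
`law(U | W = w, S = 0)` is finite in an open interval containing `αₛ`, and the law of the
centered variable `Δ₀ = U − E[U | W = w, S = 0]` under `μ(· | W = w, S = 0)` depends on `w`
only through `c`.  Then `βˢ(w) = E[U | W = w, S = s] − E[U | W = w, S = 0]` depends on `w`
only through `c`; explicitly, it equals `K_c'(αₛ)` where `K_c` is the cumulant generating
function of the (`c`-dependent) centered law of `Δ₀`. -/
theorem beta_depends_only_on_c
    {Ω 𝒜 𝒞 𝒵 : Type*} [MeasurableSpace Ω]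
    [MeasurableSpace 𝒜] [MeasurableSingletonClass 𝒜] [Countable 𝒜]
    [MeasurableSpace 𝒞] [MeasurableSingletonClass 𝒞] [Countable 𝒞]
    [MeasurableSpace 𝒵] [MeasurableSingletonClass 𝒵] [Countable 𝒵]
    (μ : Measure Ω) [IsProbabilityMeasure μ]
    (A : Ω → 𝒜) (C : Ω → 𝒞) (Z : Ω → 𝒵) (S : Ω → Fin 4)
    (hA : Measurable A) (hC : Measurable C) (hZ : Measurable Z) (hS : Measurable S)
    (U : Ω → ℝ) (hU : Measurable U) (hUint : Integrable U μ)
    (s : Fin 4) (hs : s ∈ ({1, 2, 3} : Set (Fin 4))) (αs : ℝ)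
    (hpos : ∀ (a : 𝒜) (c : 𝒞) (z : 𝒵),
      0 < μ (dyadEvent A C Z S a c z 0) ∧ 0 < μ (dyadEvent A C Z S a c z s))
    (htilt : ∀ (a : 𝒜) (c : 𝒞) (z : 𝒵),
      Measure.map U (μ[|dyadEvent A C Z S a c z s])
        = expTilt (Measure.map U (μ[|dyadEvent A C Z S a c z 0])) αs)
    (hmgf : ∀ (a : 𝒜) (c : 𝒞) (z : 𝒵), ∃ l r : ℝ, l < αs ∧ αs < r ∧
      ∀ t ∈ Set.Ioo l r, Integrable (fun x => Real.exp (t * x))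
        (Measure.map U (μ[|dyadEvent A C Z S a c z 0])))
    (hcent : ∀ (a a' : 𝒜) (c : 𝒞) (z z' : 𝒵),
      Measure.map (fun ω => U ω - condMean μ U (dyadEvent A C Z S a c z 0))
          (μ[|dyadEvent A C Z S a c z 0])
        = Measure.map (fun ω => U ω - condMean μ U (dyadEvent A C Z S a' c z' 0))
          (μ[|dyadEvent A C Z S a' c z' 0])) :
    ∀ (a a' : 𝒜) (c : 𝒞) (z z' : 𝒵),
      (condMean μ U (dyadEvent A C Z S a c z s) - condMean μ U (dyadEvent A C Z S a c z 0)
        = condMean μ U (dyadEvent A C Z S a' c z' s)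
          - condMean μ U (dyadEvent A C Z S a' c z' 0))
      ∧ condMean μ U (dyadEvent A C Z S a c z s) - condMean μ U (dyadEvent A C Z S a c z 0)
        = deriv (fun t => Real.log (∫ x, Real.exp (t * x)
            ∂(Measure.map (fun ω => U ω - condMean μ U (dyadEvent A C Z S a c z 0))
              (μ[|dyadEvent A C Z S a c z 0])))) αs :=
  beta_depends_only_on_c_general μ A C Z S U hU s αs hpos htilt hmgf hcent
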